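/- arXiv:2401.17067 — 6 statements merged into one kernel-verified Lean document; each statement's English description precedes it below -/
import Mathlib

section
/- For all positive reals ξ, ρ, τ and all integers ℓ > k ≥ 1, one has λ_ℓ^{(1)} ≠ λ_k^{(2)} if and only if ξ²τ²(ℓ² − k²)² − 2ξρτ(ℓ² + k²) − 2ρ − 1 ≠ 0, where λ_k^{(1)} = ξk² + (ρ+1)/(2τ) − r_k, λ_k^{(2)} = ξk² + (ρ+1)/(2τ) + r_k, and r_k = sqrt((ξρ/τ)k² + ((ρ+1)/(2τ))²). -/
/-!
Writing `A = ξ(ℓ² - k²)`, the equation `λ_ℓ^{(1)} = λ_k^{(2)}` says `A = r_ℓ + r_k`. Squaring twice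
turns this into `(A² - r_ℓ² - r_k²)² = 4 r_ℓ² r_k²`, whose left minus right side factors as
`(A - r_ℓ - r_k)(A + r_ℓ + r_k)(A - r_ℓ + r_k)(A + r_ℓ - r_k)`, and after clearing denominators it is
the displayed polynomial times `A² / τ²`. The squaring loses nothing because `|r_ℓ - r_k| < A`:
indeed `r_ℓ² - r_k² = (ρ/τ) A` while `r_ℓ + r_k ≥ (ρ + 1)/τ > ρ/τ`.
-/

noncomputable def rk (ξ ρ τ : ℝ) (k : ℕ) : ℝ :=
  Real.sqrt (ξ * ρ / τ * (k : ℝ) ^ 2 + ((ρ + 1) / (2 * τ)) ^ 2)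

noncomputable def lam1 (ξ ρ τ : ℝ) (k : ℕ) : ℝ :=
  ξ * (k : ℝ) ^ 2 + (ρ + 1) / (2 * τ) - rk ξ ρ τ k

noncomputable def lam2 (ξ ρ τ : ℝ) (k : ℕ) : ℝ :=
  ξ * (k : ℝ) ^ 2 + (ρ + 1) / (2 * τ) + rk ξ ρ τ k

theorem eq_add_iff_sq_sub_sq_sub_sq_sq_eq {a r s : ℝ} (hs : 0 ≤ s)
    (h : |r - s| < a) : a = r + s ↔ (a ^ 2 - r ^ 2 - s ^ 2) ^ 2 = 4 * r ^ 2 * s ^ 2 := by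
  obtain ⟨hsr, hrs⟩ := abs_lt.mp h
  have hfactor : (a ^ 2 - r ^ 2 - s ^ 2) ^ 2 - 4 * r ^ 2 * s ^ 2
      = (a - (r + s)) * ((a + r + s) * (a - r + s) * (a + r - s)) := by ring
  have hpos : (a + r + s) * (a - r + s) * (a + r - s) ≠ 0 :=
    (mul_pos (mul_pos (by linarith) (by linarith)) (by linarith)).ne'
  rw [← sub_eq_zero (a := (_ : ℝ) ^ 2), hfactor, mul_eq_zero, or_iff_left hpos, sub_eq_zero]

section

variable {ξ ρ τ : ℝ}

theorem lam1_eq_lam2_iff (k ℓ : ℕ) :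
    lam1 ξ ρ τ ℓ = lam2 ξ ρ τ k ↔ ξ * ((ℓ : ℝ) ^ 2 - (k : ℝ) ^ 2) = rk ξ ρ τ ℓ + rk ξ ρ τ k := by
  unfold lam1 lam2
  constructor <;> intro h <;> linear_combination h

theorem rk_nonneg (k : ℕ) : 0 ≤ rk ξ ρ τ k := Real.sqrt_nonneg _

theorem rk_sq (h : 0 ≤ ξ * ρ / τ) (k : ℕ) :
    rk ξ ρ τ k ^ 2 = ξ * ρ / τ * (k : ℝ) ^ 2 + ((ρ + 1) / (2 * τ)) ^ 2 :=
  Real.sq_sqrt (by positivity)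

theorem le_rk (h : 0 ≤ ξ * ρ / τ) (k : ℕ) : (ρ + 1) / (2 * τ) ≤ rk ξ ρ τ k :=
  (le_abs_self _).trans (Real.abs_le_sqrt (by nlinarith [sq_nonneg (k : ℝ)]))

theorem abs_rk_sub_rk_lt (hξ : 0 < ξ) (hρ : 0 < ρ) (hτ : 0 < τ) {k ℓ : ℕ} (hkl : k < ℓ) :
    |rk ξ ρ τ ℓ - rk ξ ρ τ k| < ξ * ((ℓ : ℝ) ^ 2 - (k : ℝ) ^ 2) := by
  have hnonneg : 0 ≤ ξ * ρ / τ := by positivity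
  set A := ξ * ((ℓ : ℝ) ^ 2 - (k : ℝ) ^ 2)
  have hA : 0 < A := mul_pos hξ (sub_pos.mpr (by gcongr))
  have hsum : ρ / τ < rk ξ ρ τ ℓ + rk ξ ρ τ k := by
    have h2c : 2 * ((ρ + 1) / (2 * τ)) = ρ / τ + 1 / τ := by field_simp
    have hℓ := le_rk hnonneg ℓ
    have hk := le_rk hnonneg k
    have hτ_inv : 0 < 1 / τ := by positivity
    linarith
  have hprod : |rk ξ ρ τ ℓ - rk ξ ρ τ k| * (rk ξ ρ τ ℓ + rk ξ ρ τ k) = ρ / τ * A := by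
    have hdiff : (rk ξ ρ τ ℓ - rk ξ ρ τ k) * (rk ξ ρ τ ℓ + rk ξ ρ τ k) = ρ / τ * A := by
      linear_combination rk_sq hnonneg ℓ - rk_sq hnonneg k
    rw [← abs_of_nonneg (add_nonneg (rk_nonneg ℓ) (rk_nonneg k)), ← abs_mul, hdiff,
      abs_of_pos (by positivity)]
  have hsum_pos : 0 < rk ξ ρ τ ℓ + rk ξ ρ τ k := lt_of_le_of_lt (by positivity) hsum
  refine lt_of_mul_lt_mul_right ?_ hsum_pos.le
  rw [hprod, mul_comm A]
  exact mul_lt_mul_of_pos_right hsum hA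

theorem quartic_rk_eq (hnonneg : 0 ≤ ξ * ρ / τ) (hτ : τ ≠ 0) (k ℓ : ℕ) :
    (ξ ^ 2 * τ ^ 2 * ((ℓ : ℝ) ^ 2 - (k : ℝ) ^ 2) ^ 2
        - 2 * ξ * ρ * τ * ((ℓ : ℝ) ^ 2 + (k : ℝ) ^ 2) - 2 * ρ - 1)
        * (ξ * ((ℓ : ℝ) ^ 2 - (k : ℝ) ^ 2)) ^ 2
      = τ ^ 2 * (((ξ * ((ℓ : ℝ) ^ 2 - (k : ℝ) ^ 2)) ^ 2 - rk ξ ρ τ ℓ ^ 2 - rk ξ ρ τ k ^ 2) ^ 2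
          - 4 * rk ξ ρ τ ℓ ^ 2 * rk ξ ρ τ k ^ 2) := by
  rw [rk_sq hnonneg, rk_sq hnonneg]
  field_simp
  ring

end

theorem stmt_4_general (ξ ρ τ : ℝ) (hξ : 0 < ξ) (hρ : 0 < ρ) (hτ : 0 < τ)
    (k ℓ : ℕ) (hkl : k < ℓ) :
    lam1 ξ ρ τ ℓ ≠ lam2 ξ ρ τ k ↔
      ξ ^ 2 * τ ^ 2 * ((ℓ : ℝ) ^ 2 - (k : ℝ) ^ 2) ^ 2
        - 2 * ξ * ρ * τ * ((ℓ : ℝ) ^ 2 + (k : ℝ) ^ 2) - 2 * ρ - 1 ≠ 0 := by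
  have hA : ξ * ((ℓ : ℝ) ^ 2 - (k : ℝ) ^ 2) ≠ 0 := (mul_pos hξ (sub_pos.mpr (by gcongr))).ne'
  have hquartic := quartic_rk_eq (by positivity : 0 ≤ ξ * ρ / τ) hτ.ne' k ℓ
  rw [ne_eq, ne_eq, not_iff_not, lam1_eq_lam2_iff,
    eq_add_iff_sq_sub_sq_sub_sq_sq_eq (rk_nonneg k)
      (abs_rk_sub_rk_lt hξ hρ hτ hkl), ← sub_eq_zero (a := (_ : ℝ) ^ 2),
    ← mul_eq_zero_iff_left (pow_ne_zero 2 hτ.ne'), ← hquartic,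
    mul_eq_zero_iff_right (pow_ne_zero 2 hA)]

theorem stmt_4 (ξ ρ τ : ℝ) (hξ : 0 < ξ) (hρ : 0 < ρ) (hτ : 0 < τ)
    (k ℓ : ℕ) (hk : 1 ≤ k) (hkl : k < ℓ) :
    lam1 ξ ρ τ ℓ ≠ lam2 ξ ρ τ k ↔
      ξ ^ 2 * τ ^ 2 * ((ℓ : ℝ) ^ 2 - (k : ℝ) ^ 2) ^ 2
        - 2 * ξ * ρ * τ * ((ℓ : ℝ) ^ 2 + (k : ℝ) ^ 2) - 2 * ρ - 1 ≠ 0 :=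
  stmt_4_general ξ ρ τ hξ hρ hτ k ℓ hkl
end

section
/- Suppose ξ, ρ, τ > 0 and ξ = (1/j²)(ρ/τ) for some integer j ≥ 1. Then for every k ≥ 1 one has λ_{k+j}^{(1)} < λ_k^{(2)}, and the difference λ_k^{(2)} − λ_{k+j}^{(1)} tends to 0 as k → ∞; consequently inf over distinct pairs of eigenvalues of |λ_k^{(2)} − λ_ℓ^{(1)}| is 0. -/
/-!
Under the resonance `ξ = ρ / (τ j²)` one has `ξρ/τ = (ξj)²`, so with `a = ξj` and
`c = (ρ + 1)/(2τ)` the root is `r_k = √((ak)² + c²)`, and since `ξ(k + j)² - ξk² = ak + a(k + j)`,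
`λ_k^{(2)} - λ_{k+j}^{(1)} = g(ak) + g(a(k + j))` with `g(x) = √(x² + c²) - x`.
The excess `g` is positive for `c ≠ 0` and at most `c²/(2x)` for `x > 0`, so the gaps are positive
and tend to `0`, which forces the infimum of the (nonnegative) set of differences to be `0`.
-/

open Filter Topology

lemma self_le_sqrt_sq_add_sq (x c : ℝ) : x ≤ √(x ^ 2 + c ^ 2) :=
  calc x ≤ |x| := le_abs_self x
    _ = √(x ^ 2) := (Real.sqrt_sq_eq_abs x).symm
    _ ≤ √(x ^ 2 + c ^ 2) := Real.sqrt_le_sqrt (by nlinarith [sq_nonneg c])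

lemma lt_sqrt_sq_add_sq (x : ℝ) {c : ℝ} (hc : c ≠ 0) : x < √(x ^ 2 + c ^ 2) :=
  calc x ≤ |x| := le_abs_self x
    _ = √(x ^ 2) := (Real.sqrt_sq_eq_abs x).symm
    _ < √(x ^ 2 + c ^ 2) := Real.sqrt_lt_sqrt (sq_nonneg x) (by simpa using pow_pos (abs_pos.2 hc) 2)

lemma sqrt_sq_add_sq_sub_self_le {x : ℝ} (hx : 0 < x) (c : ℝ) :
    √(x ^ 2 + c ^ 2) - x ≤ c ^ 2 / (2 * x) := by
  have hmul : 2 * x * (c ^ 2 / (2 * x)) = c ^ 2 := by field_simp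
  rw [sub_le_iff_le_add', Real.sqrt_le_left (by positivity)]
  nlinarith [sq_nonneg (c ^ 2 / (2 * x))]

lemma tendsto_sqrt_sq_add_sq_sub_self (c : ℝ) :
    Tendsto (fun x : ℝ => √(x ^ 2 + c ^ 2) - x) atTop (𝓝 0) := by
  have hbound : Tendsto (fun x : ℝ => c ^ 2 / (2 * x)) atTop (𝓝 0) :=
    tendsto_const_nhds.div_atTop (tendsto_id.const_mul_atTop two_pos)
  refine tendsto_of_tendsto_of_tendsto_of_le_of_le' tendsto_const_nhds hbound
    (Eventually.of_forall fun x => sub_nonneg.2 (self_le_sqrt_sq_add_sq x c)) ?_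
  filter_upwards [eventually_gt_atTop 0] with x hx using sqrt_sq_add_sq_sub_self_le hx c

lemma sInf_eq_zero_of_tendsto {ι : Type*} {l : Filter ι} [l.NeBot] {S : Set ℝ}
    (hS : ∀ x ∈ S, 0 ≤ x) {u : ι → ℝ} (hu : Tendsto u l (𝓝 0)) (hmem : ∀ᶠ i in l, u i ∈ S) :
    sInf S = 0 :=
  le_antisymm (ge_of_tendsto hu (hmem.mono fun _ hi => csInf_le ⟨0, hS⟩ hi))
    (Real.sInf_nonneg hS)

lemma rk_eq_sqrt {ξ ρ τ a : ℝ} (ha : ξ * ρ / τ = a ^ 2) (k : ℕ) :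
    rk ξ ρ τ k = √((a * k) ^ 2 + ((ρ + 1) / (2 * τ)) ^ 2) := by
  rw [rk, ha, mul_pow]

lemma lam2_sub_lam1_add (ξ ρ τ : ℝ) (j k : ℕ) :
    lam2 ξ ρ τ k - lam1 ξ ρ τ (k + j) =
      (rk ξ ρ τ k - ξ * j * k) + (rk ξ ρ τ (k + j) - ξ * j * ↑(k + j)) := by
  unfold lam1 lam2
  push_cast
  ring

theorem stmt_6 (ξ ρ τ : ℝ) (hξ : 0 < ξ) (hρ : 0 < ρ) (hτ : 0 < τ)
    (j : ℕ) (hj : 1 ≤ j) (hres : ξ = ρ / (τ * (j : ℝ) ^ 2)) :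
    (∀ k : ℕ, 1 ≤ k → lam1 ξ ρ τ (k + j) < lam2 ξ ρ τ k) ∧
    Filter.Tendsto (fun k : ℕ => lam2 ξ ρ τ k - lam1 ξ ρ τ (k + j))
      Filter.atTop (nhds 0) ∧
    sInf {x : ℝ | ∃ k ℓ : ℕ, 1 ≤ k ∧ 1 ≤ ℓ ∧ lam2 ξ ρ τ k ≠ lam1 ξ ρ τ ℓ ∧
      x = |lam2 ξ ρ τ k - lam1 ξ ρ τ ℓ|} = 0 := by
  have hj₀ : (0 : ℝ) < j := by exact_mod_cast hj
  have hc : (ρ + 1) / (2 * τ) ≠ 0 := by positivity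
  have hrk : ∀ k, rk ξ ρ τ k = √((ξ * j * k) ^ 2 + ((ρ + 1) / (2 * τ)) ^ 2) :=
    rk_eq_sqrt (by rw [hres]; field_simp)
  set u : ℕ → ℝ := fun k => rk ξ ρ τ k - ξ * j * k
  have hu_pos (k : ℕ) : 0 < u k := sub_pos.2 (hrk k ▸ lt_sqrt_sq_add_sq _ hc)
  have hu_lim : Tendsto u atTop (𝓝 0) := by
    simp only [u, hrk]
    exact (tendsto_sqrt_sq_add_sq_sub_self _).comp
      (tendsto_natCast_atTop_atTop.const_mul_atTop (by positivity))
  have hgap (k : ℕ) : 0 < lam2 ξ ρ τ k - lam1 ξ ρ τ (k + j) := by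
    rw [lam2_sub_lam1_add]
    exact add_pos (hu_pos k) (hu_pos (k + j))
  have hlim : Tendsto (fun k : ℕ => lam2 ξ ρ τ k - lam1 ξ ρ τ (k + j)) atTop (𝓝 0) := by
    have hsum := hu_lim.add (hu_lim.comp (tendsto_add_atTop_nat j))
    rw [add_zero] at hsum
    exact hsum.congr fun k => (lam2_sub_lam1_add ξ ρ τ j k).symm
  refine ⟨fun k _ => sub_pos.1 (hgap k), hlim, sInf_eq_zero_of_tendsto ?_ hlim ?_⟩
  · rintro x ⟨k, ℓ, -, -, -, rfl⟩
    exact abs_nonneg _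
  · filter_upwards [eventually_ge_atTop 1] with k hk
    exact ⟨k, k + j, hk, le_add_right hk, (sub_pos.1 (hgap k)).ne', (abs_of_pos (hgap k)).symm⟩
end

section
/- For all positive reals ξ, ρ, τ, each eigenvalue can be written λ_k^{(1)} = ξk² + (ρ+1)/(2τ) − sqrt(ξρ/τ)·k − ε_k/k and λ_k^{(2)} = ξk² + (ρ+1)/(2τ) + sqrt(ξρ/τ)·k + ε_k/k, where (ε_k)_{k≥1} is a positive increasing sequence converging to (1/2)((ρ+1)/(2τ))² · sqrt(τ/(ξρ)). -/
/-!
With `a = ξρ/τ` and `b = ((ρ+1)/(2τ))²`, rationalizing gives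
`ε_k = k (√(a k² + b) - √a k) = b / (√(a + b/k²) + √a)`.
The right-hand side is positive, increases because `b/k²` decreases, and tends to `b / (2√a)`.
-/

open Real Filter Topology Set

noncomputable def sqrtGap (a b x : ℝ) : ℝ := x * (√(a * x ^ 2 + b) - √a * x)

section
variable {a b x : ℝ}

theorem sqrtGap_eq_div (ha : 0 < a) (hb : 0 ≤ b) (hx : 0 < x) :
    sqrtGap a b x = b / (√(a + b / x ^ 2) + √a) := by
  have hfactor : √(a * x ^ 2 + b) = x * √(a + b / x ^ 2) := by
    rw [show a * x ^ 2 + b = x ^ 2 * (a + b / x ^ 2) by field_simp,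
      Real.sqrt_mul (sq_nonneg x), Real.sqrt_sq hx.le]
  have hden : 0 < √(a + b / x ^ 2) + √a := by positivity
  have hsq : √(a + b / x ^ 2) ^ 2 = a + b / x ^ 2 := Real.sq_sqrt (by positivity)
  have hsa : √a ^ 2 = a := Real.sq_sqrt ha.le
  rw [sqrtGap, hfactor, eq_div_iff hden.ne']
  have hcancel : x ^ 2 * (b / x ^ 2) = b := by field_simp
  linear_combination x ^ 2 * hsq - x ^ 2 * hsa + hcancel

theorem sqrtGap_pos (ha : 0 < a) (hb : 0 < b) (hx : 0 < x) : 0 < sqrtGap a b x := by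
  rw [sqrtGap_eq_div ha hb.le hx]
  positivity

theorem strictMonoOn_sqrtGap (ha : 0 < a) (hb : 0 < b) : StrictMonoOn (sqrtGap a b) (Ioi 0) := by
  intro x (hx : 0 < x) y (hy : 0 < y) hxy
  rw [sqrtGap_eq_div ha hb.le hx, sqrtGap_eq_div ha hb.le hy]
  gcongr

theorem tendsto_sqrtGap_atTop (ha : 0 < a) (hb : 0 ≤ b) :
    Tendsto (sqrtGap a b) atTop (𝓝 (b / (2 * √a))) := by
  have hinv : Tendsto (fun x : ℝ => b / x ^ 2) atTop (𝓝 0) :=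
    tendsto_const_nhds.div_atTop (tendsto_pow_atTop two_ne_zero)
  have hlim : Tendsto (fun x : ℝ => b / (√(a + b / x ^ 2) + √a)) atTop (𝓝 (b / (2 * √a))) := by
    have := ((continuous_sqrt.tendsto a).comp (by simpa using hinv.const_add a)).add_const √a
    rw [show 2 * √a = √a + √a by ring]
    exact tendsto_const_nhds.div this (by positivity)
  refine hlim.congr' ?_
  filter_upwards [eventually_gt_atTop 0] with x hx
  exact (sqrtGap_eq_div ha hb hx).symm
end

theorem rk_eq_sqrtGap (ξ ρ τ : ℝ) {k : ℕ} (hk : k ≠ 0) :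
    rk ξ ρ τ k = √(ξ * ρ / τ) * k + sqrtGap (ξ * ρ / τ) (((ρ + 1) / (2 * τ)) ^ 2) k / k := by
  rw [sqrtGap, rk]
  field_simp
  ring

theorem stmt_7 (ξ ρ τ : ℝ) (hξ : 0 < ξ) (hρ : 0 < ρ) (hτ : 0 < τ) :
    ∃ ε : ℕ → ℝ,
      (∀ k : ℕ, 1 ≤ k → 0 < ε k) ∧
      (∀ k : ℕ, 1 ≤ k → ε k < ε (k + 1)) ∧
      Filter.Tendsto ε Filter.atTop
        (nhds ((1 / 2) * ((ρ + 1) / (2 * τ)) ^ 2 * Real.sqrt (τ / (ξ * ρ)))) ∧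
      (∀ k : ℕ, 1 ≤ k →
        lam1 ξ ρ τ k = ξ * (k : ℝ) ^ 2 + (ρ + 1) / (2 * τ)
          - Real.sqrt (ξ * ρ / τ) * (k : ℝ) - ε k / (k : ℝ) ∧
        lam2 ξ ρ τ k = ξ * (k : ℝ) ^ 2 + (ρ + 1) / (2 * τ)
          + Real.sqrt (ξ * ρ / τ) * (k : ℝ) + ε k / (k : ℝ)) := by
  set a := ξ * ρ / τ
  set b := ((ρ + 1) / (2 * τ)) ^ 2
  have ha : 0 < a := by positivity
  have hb : 0 < b := by positivity
  have hlimit : b / (2 * √a) = 1 / 2 * b * √(τ / (ξ * ρ)) := by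
    rw [show τ / (ξ * ρ) = a⁻¹ by simp only [a, inv_div], sqrt_inv]
    field_simp
  refine ⟨fun k => sqrtGap a b k, fun k hk => sqrtGap_pos ha hb (by positivity),
    fun k hk => ?_, ?_, fun k hk => ?_⟩
  · exact strictMonoOn_sqrtGap ha hb (show (0 : ℝ) < k by positivity)
      (show (0 : ℝ) < (k + 1 : ℕ) by positivity) (by simp)
  · rw [← hlimit]
    exact (tendsto_sqrtGap_atTop ha hb.le).comp tendsto_natCast_atTop_atTop
  · have hrk := rk_eq_sqrtGap ξ ρ τ (Nat.one_le_iff_ne_zero.mp hk)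
    constructor
    · rw [lam1, hrk]; ring
    · rw [lam2, hrk]; ring
end

section
/- Let ξ, ρ, τ > 0 satisfy ξ ≠ ρ/(j²τ) for all integers j ≥ 1. Then there exist an integer k₁ ≥ 1 (depending only on ξ, ρ, τ) such that for all integers k, ℓ ≥ 1 with |k − ℓ| ≥ k₁, one has |λ_k^{(1)} − λ_ℓ^{(1)}| ≥ (ξ/2)|k² − ℓ²|, |λ_k^{(2)} − λ_ℓ^{(2)}| ≥ (ξ/2)|k² − ℓ²|, and |λ_k^{(2)} − λ_ℓ^{(1)}| ≥ (ξ/2)|k² − ℓ²|. -/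
/-!
Write `a = ξρ/τ` and `c = ((ρ+1)/(2τ))²`, so that `r_k = √(a k² + c) ≤ √a k + √c`. Each of the
three differences is `ξ (k² - ℓ²)` perturbed by `±(r_k - r_ℓ)` or `r_k + r_ℓ`, all of absolute
value at most `r_k + r_ℓ ≤ (√a + 2√c)(k + ℓ)`. Once `|k - ℓ| ≥ 2(√a + 2√c)/ξ` this is at most
`(ξ/2)|k - ℓ|(k + ℓ) = (ξ/2)|k² - ℓ²|`, which leaves at least half of `ξ |k² - ℓ²|`.
-/

lemma Real.sqrt_mul_sq_add_le {a c : ℝ} (ha : 0 ≤ a) (hc : 0 ≤ c) (x : ℝ) :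
    √(a * x ^ 2 + c) ≤ √a * |x| + √c := by
  rw [Real.sqrt_le_iff]
  refine ⟨by positivity, ?_⟩
  have hsum : (√a * |x| + √c) ^ 2 = a * x ^ 2 + c + 2 * (√a * |x| * √c) := by
    rw [add_sq, mul_pow, sq_abs, Real.sq_sqrt ha, Real.sq_sqrt hc]; ring
  rw [hsum]
  have : 0 ≤ √a * |x| * √c := by positivity
  linarith

lemma Real.sqrt_mul_sq_add_add_le_half_mul_abs_sq_sub {ξ a c x y : ℝ} (hξ : 0 < ξ)
    (ha : 0 ≤ a) (hc : 0 ≤ c) (hx : 0 ≤ x) (hy : 0 ≤ y) (hxy : 1 ≤ x + y)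
    (hsep : 2 * (√a + 2 * √c) / ξ ≤ |x - y|) :
    √(a * x ^ 2 + c) + √(a * y ^ 2 + c) ≤ ξ / 2 * |x ^ 2 - y ^ 2| := by
  have hrx := Real.sqrt_mul_sq_add_le ha hc x
  have hry := Real.sqrt_mul_sq_add_le ha hc y
  rw [abs_of_nonneg hx] at hrx
  rw [abs_of_nonneg hy] at hry
  have hgap : √a + 2 * √c ≤ ξ / 2 * |x - y| := by
    rw [div_le_iff₀ hξ] at hsep
    linarith
  have hc' : 2 * √c ≤ 2 * √c * (x + y) := le_mul_of_one_le_right (by positivity) hxy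
  calc √(a * x ^ 2 + c) + √(a * y ^ 2 + c)
      ≤ (√a + 2 * √c) * (x + y) := by linarith
    _ ≤ ξ / 2 * |x - y| * (x + y) := by gcongr
    _ = ξ / 2 * |x ^ 2 - y ^ 2| := by
      rw [sq_sub_sq, abs_mul, abs_of_nonneg (by linarith : 0 ≤ x + y)]; ring

lemma half_mul_abs_le_abs_mul_add {ξ t e : ℝ} (hξ : 0 ≤ ξ) (he : |e| ≤ ξ / 2 * |t|) :
    ξ / 2 * |t| ≤ |ξ * t + e| := by
  have := abs_sub_abs_le_abs_add (ξ * t) e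
  rw [abs_mul, abs_of_nonneg hξ] at this
  linarith

theorem stmt_9_general (ξ ρ τ : ℝ) (hξ : 0 < ξ) (hρ : 0 < ρ) (hτ : 0 < τ) :
    ∃ k₁ : ℕ, 1 ≤ k₁ ∧
      ∀ k ℓ : ℕ, 1 ≤ k → 1 ≤ ℓ → (k₁ : ℝ) ≤ |(k : ℝ) - (ℓ : ℝ)| →
        |lam1 ξ ρ τ k - lam1 ξ ρ τ ℓ| ≥ ξ / 2 * |(k : ℝ) ^ 2 - (ℓ : ℝ) ^ 2| ∧
        |lam2 ξ ρ τ k - lam2 ξ ρ τ ℓ| ≥ ξ / 2 * |(k : ℝ) ^ 2 - (ℓ : ℝ) ^ 2| ∧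
        |lam2 ξ ρ τ k - lam1 ξ ρ τ ℓ| ≥ ξ / 2 * |(k : ℝ) ^ 2 - (ℓ : ℝ) ^ 2| := by
  set a := ξ * ρ / τ
  set c := ((ρ + 1) / (2 * τ)) ^ 2
  refine ⟨⌈2 * (√a + 2 * √c) / ξ⌉₊ + 1, by omega, fun k ℓ hk _ hsep => ?_⟩
  have hceil := Nat.le_ceil (2 * (√a + 2 * √c) / ξ)
  push_cast at hsep
  have hk' : (1 : ℝ) ≤ k := by exact_mod_cast hk
  have hr : rk ξ ρ τ k + rk ξ ρ τ ℓ ≤ ξ / 2 * |(k : ℝ) ^ 2 - (ℓ : ℝ) ^ 2| :=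
    Real.sqrt_mul_sq_add_add_le_half_mul_abs_sq_sub hξ (by positivity) (sq_nonneg _)
      (Nat.cast_nonneg k) (Nat.cast_nonneg ℓ) (by linarith [(Nat.cast_nonneg ℓ : (0 : ℝ) ≤ ℓ)])
      (by linarith)
  have hrk : 0 ≤ rk ξ ρ τ k := Real.sqrt_nonneg _
  have hrℓ : 0 ≤ rk ξ ρ τ ℓ := Real.sqrt_nonneg _
  have hperturb (e : ℝ) (he : |e| ≤ rk ξ ρ τ k + rk ξ ρ τ ℓ) :
      ξ / 2 * |(k : ℝ) ^ 2 - (ℓ : ℝ) ^ 2| ≤ |ξ * ((k : ℝ) ^ 2 - (ℓ : ℝ) ^ 2) + e| :=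
    half_mul_abs_le_abs_mul_add hξ.le (he.trans hr)
  refine ⟨?_, ?_, ?_⟩
  · convert hperturb (rk ξ ρ τ ℓ - rk ξ ρ τ k) (abs_le.2 ⟨by linarith, by linarith⟩) using 2
    unfold lam1; ring
  · convert hperturb (rk ξ ρ τ k - rk ξ ρ τ ℓ) (abs_le.2 ⟨by linarith, by linarith⟩) using 2
    unfold lam2; ring
  · convert hperturb (rk ξ ρ τ k + rk ξ ρ τ ℓ) (abs_of_nonneg (by positivity)).le using 2
    unfold lam1 lam2; ring

theorem stmt_9 (ξ ρ τ : ℝ) (hξ : 0 < ξ) (hρ : 0 < ρ) (hτ : 0 < τ)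
    (hH1 : ∀ j : ℕ, 1 ≤ j → ξ ≠ ρ / ((j : ℝ) ^ 2 * τ)) :
    ∃ k₁ : ℕ, 1 ≤ k₁ ∧
      ∀ k ℓ : ℕ, 1 ≤ k → 1 ≤ ℓ → (k₁ : ℝ) ≤ |(k : ℝ) - (ℓ : ℝ)| →
        |lam1 ξ ρ τ k - lam1 ξ ρ τ ℓ| ≥ ξ / 2 * |(k : ℝ) ^ 2 - (ℓ : ℝ) ^ 2| ∧
        |lam2 ξ ρ τ k - lam2 ξ ρ τ ℓ| ≥ ξ / 2 * |(k : ℝ) ^ 2 - (ℓ : ℝ) ^ 2| ∧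
        |lam2 ξ ρ τ k - lam1 ξ ρ τ ℓ| ≥ ξ / 2 * |(k : ℝ) ^ 2 - (ℓ : ℝ) ^ 2| :=
  stmt_9_general ξ ρ τ hξ hρ hτ
end

section
/- For all positive reals ξ, ρ, τ and every r ≥ 0, the number n₂ of integers k ≥ 1 with λ_k^{(2)} ≤ r satisfies sqrt(r)/sqrt(ξ) − (1/(2sqrt(ξ)))(sqrt(ρ/τ) + sqrt((3ρ+4)/τ)) − 1 ≤ n₂ ≤ sqrt(r)/sqrt(ξ). -/
open Real

namespace Set

theorem ncard_le_of_subset_Icc_floor {S : Set ℕ} {b : ℝ} (hb : 0 ≤ b)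
    (h : S ⊆ Icc 1 ⌊b⌋₊) : (S.ncard : ℝ) ≤ b := by
  have hcard : S.ncard ≤ ⌊b⌋₊ := by
    simpa using ncard_le_ncard h (finite_Icc _ _)
  exact (Nat.cast_le.mpr hcard).trans (Nat.floor_le hb)

theorem sub_one_le_ncard_of_Icc_floor_subset {S : Set ℕ} {a : ℝ} (hS : S.Finite)
    (h : Icc 1 ⌊a⌋₊ ⊆ S) : a - 1 ≤ (S.ncard : ℝ) := by
  have hcard : ⌊a⌋₊ ≤ S.ncard := by
    simpa using ncard_le_ncard h hS
  linarith [Nat.sub_one_lt_floor a, (Nat.cast_le (α := ℝ)).mpr hcard]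

end Set

section Eigenvalues

variable {ξ ρ τ : ℝ} (k : ℕ)

theorem mul_sq_le_lam2 (hρ : 0 ≤ ρ) (hτ : 0 ≤ τ) : ξ * (k : ℝ) ^ 2 ≤ lam2 ξ ρ τ k := by
  have : 0 ≤ (ρ + 1) / (2 * τ) := by positivity
  have : 0 ≤ rk ξ ρ τ k := sqrt_nonneg _
  unfold lam2
  linarith

theorem rk_le_sqrt_mul_add (hξ : 0 ≤ ξ) (hρ : 0 ≤ ρ) (hτ : 0 ≤ τ) :
    rk ξ ρ τ k ≤ √(ρ / τ) * (√ξ * k) + (ρ + 1) / (2 * τ) := by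
  have hc : 0 ≤ (ρ + 1) / (2 * τ) := by positivity
  have hpq : 0 ≤ √(ρ / τ) * (√ξ * k) := by positivity
  have hpq_sq : (√(ρ / τ) * (√ξ * k)) ^ 2 = ξ * ρ / τ * (k : ℝ) ^ 2 := by
    rw [mul_pow, mul_pow, sq_sqrt (by positivity), sq_sqrt hξ]
    ring
  rw [rk, sqrt_le_left (by positivity), ← hpq_sq]
  nlinarith

theorem lam2_le_of_sqrt_mul_add_le {r : ℝ} (hξ : 0 ≤ ξ) (hρ : 0 ≤ ρ) (hτ : 0 ≤ τ) (hr : 0 ≤ r)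
    (hk : √ξ * k + (√(ρ / τ) + √((3 * ρ + 4) / τ)) / 2 ≤ √r) : lam2 ξ ρ τ k ≤ r := by
  set q := √ξ * k
  set p := √(ρ / τ)
  set g := √((3 * ρ + 4) / τ)
  have hq : 0 ≤ q := by positivity
  have hp : 0 ≤ p := sqrt_nonneg _
  have hg : 0 ≤ g := sqrt_nonneg _
  have hq_sq : q ^ 2 = ξ * (k : ℝ) ^ 2 := by rw [mul_pow, sq_sqrt hξ]
  have hpg_sq : p ^ 2 + g ^ 2 = 4 * ((ρ + 1) / τ) := by
    rw [sq_sqrt (by positivity), sq_sqrt (by positivity)]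
    ring
  calc lam2 ξ ρ τ k ≤ q ^ 2 + p * q + (p ^ 2 + g ^ 2) / 4 := by
        rw [lam2, hq_sq, hpg_sq]
        linarith [rk_le_sqrt_mul_add k hξ hρ hτ,
          show (ρ + 1) / τ = 2 * ((ρ + 1) / (2 * τ)) by ring]
    _ ≤ (q + (p + g) / 2) ^ 2 := by nlinarith [mul_nonneg hq hg, mul_nonneg hp hg]
    _ ≤ √r ^ 2 := pow_le_pow_left₀ (by positivity) hk 2
    _ = r := sq_sqrt hr

theorem sqrt_mul_le_sqrt_of_lam2_le {r : ℝ} (hξ : 0 ≤ ξ) (hρ : 0 ≤ ρ) (hτ : 0 ≤ τ)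
    (hk : lam2 ξ ρ τ k ≤ r) : √ξ * k ≤ √r := by
  rw [← sqrt_sq (Nat.cast_nonneg k), ← sqrt_mul hξ]
  exact sqrt_le_sqrt ((mul_sq_le_lam2 k hρ hτ).trans hk)

end Eigenvalues

theorem stmt_12 (ξ ρ τ : ℝ) (hξ : 0 < ξ) (hρ : 0 < ρ) (hτ : 0 < τ)
    (r : ℝ) (hr : 0 ≤ r) :
    Real.sqrt r / Real.sqrt ξ
        - (1 / (2 * Real.sqrt ξ)) * (Real.sqrt (ρ / τ) + Real.sqrt ((3 * ρ + 4) / τ)) - 1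
        ≤ (({k : ℕ | 1 ≤ k ∧ lam2 ξ ρ τ k ≤ r}).ncard : ℝ) ∧
    (({k : ℕ | 1 ≤ k ∧ lam2 ξ ρ τ k ≤ r}).ncard : ℝ) ≤ Real.sqrt r / Real.sqrt ξ := by
  have hsξ : 0 < √ξ := sqrt_pos.mpr hξ
  have hupper : {k : ℕ | 1 ≤ k ∧ lam2 ξ ρ τ k ≤ r} ⊆ Set.Icc 1 ⌊√r / √ξ⌋₊ := by
    rintro k ⟨hk, hle⟩
    refine ⟨hk, Nat.le_floor ((le_div_iff₀ hsξ).mpr ?_)⟩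
    linarith [sqrt_mul_le_sqrt_of_lam2_le k hξ.le hρ.le hτ.le hle]
  have hlower : Set.Icc 1 ⌊√r / √ξ - 1 / (2 * √ξ) * (√(ρ / τ) + √((3 * ρ + 4) / τ))⌋₊ ⊆
      {k : ℕ | 1 ≤ k ∧ lam2 ξ ρ τ k ≤ r} := by
    rintro k ⟨hk, hle⟩
    refine ⟨hk, lam2_le_of_sqrt_mul_add_le k hξ.le hρ.le hτ.le hr ?_⟩
    have hk' := mul_le_mul_of_nonneg_left ((Nat.le_floor_iff' (by omega)).mp hle) hsξ.le
    have hscale : √ξ * (√r / √ξ - 1 / (2 * √ξ) * (√(ρ / τ) + √((3 * ρ + 4) / τ))) =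
        √r - (√(ρ / τ) + √((3 * ρ + 4) / τ)) / 2 := by
      field_simp
    linarith
  exact ⟨Set.sub_one_le_ncard_of_Icc_floor_subset ((Set.finite_Icc _ _).subset hupper) hlower,
    Set.ncard_le_of_subset_Icc_floor (by positivity) hupper⟩
end

section
/- For all positive reals ξ, ρ, τ, there exist constants p = 2/sqrt(ξ) and α > 0 (depending only on ξ, ρ, τ) such that the counting function N(r) = #{(k,i) : k ≥ 1, i ∈ {1,2}, λ_k^{(i)} ≤ r} satisfies |p·sqrt(r) − N(r)| ≤ α for all r > 0. -/
/-- The counting function: number of eigenvalues (with index multiplicity) that are `≤ r`. -/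
noncomputable def countFn (ξ ρ τ : ℝ) (r : ℝ) : ℕ :=
  ({k : ℕ | 1 ≤ k ∧ lam1 ξ ρ τ k ≤ r}).ncard + ({k : ℕ | 1 ≤ k ∧ lam2 ξ ρ τ k ≤ r}).ncard

/-!
Write `s = √(r/ξ)`. The square root in `λ_k^{(i)}` is `√(ξρ/τ)·k + O(1)`, so both branches stay
within `O(k)` of `ξk²`. Hence `λ_k^{(i)} ≤ r` forces `k ≤ s + O(1)` and is implied by
`k ≤ s - O(1)`, so each branch contributes `s + O(1)` eigenvalues and `N(r) = 2s + O(1)`.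
-/

open Real

lemma sub_one_lt_ncard_and_ncard_le {S : Set ℕ} {t₁ t₂ : ℝ}
    (hsub : ∀ k : ℕ, 1 ≤ k → (k : ℝ) ≤ t₁ → k ∈ S)
    (hsup : ∀ k ∈ S, 1 ≤ k ∧ (k : ℝ) ≤ t₂) (ht₂ : 0 ≤ t₂) :
    t₁ - 1 < S.ncard ∧ (S.ncard : ℝ) ≤ t₂ := by
  have hS : S ⊆ ↑(Finset.Icc 1 ⌊t₂⌋₊) := fun k hk => by
    obtain ⟨hk1, hkt⟩ := hsup k hk
    simpa using ⟨hk1, Nat.le_floor hkt⟩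
  have hIcc : ↑(Finset.Icc 1 ⌊t₁⌋₊) ⊆ S := fun k hk => by
    obtain ⟨hk1, hkt⟩ := Finset.mem_Icc.mp hk
    exact hsub k hk1 ((Nat.le_floor_iff' (by omega)).mp hkt)
  have hlow : ⌊t₁⌋₊ ≤ S.ncard := by
    simpa using Set.ncard_le_ncard hIcc ((Finset.Icc 1 ⌊t₂⌋₊).finite_toSet.subset hS)
  have hup : S.ncard ≤ ⌊t₂⌋₊ := by
    simpa using Set.ncard_le_ncard hS
  constructor
  · exact (Nat.sub_one_lt_floor t₁).trans_le (by exact_mod_cast hlow)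
  · exact (Nat.cast_le.mpr hup).trans (Nat.floor_le ht₂)

lemma abs_sub_ncard_le_of_abs_sub_sq_le {ξ a b : ℝ} (hξ : 0 < ξ) (ha : 0 ≤ a) (hb : 0 ≤ b)
    {f : ℕ → ℝ} (hf : ∀ k : ℕ, |f k - ξ * k ^ 2| ≤ a * k + b) {r : ℝ} (hr : 0 ≤ r) :
    |√r / √ξ - {k : ℕ | 1 ≤ k ∧ f k ≤ r}.ncard| ≤ (a + b) / ξ + 1 := by
  set s := √r / √ξ
  have hs : 0 ≤ s := by positivity
  have hrs : r = ξ * s ^ 2 := by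
    rw [div_pow, sq_sqrt hr, sq_sqrt hξ.le]; field_simp
  have hlow : ∀ k : ℕ, 1 ≤ k → (k : ℝ) ≤ s - (a + b) / ξ → k ∈ {k : ℕ | 1 ≤ k ∧ f k ≤ r} := by
    intro k hk1 hks
    refine ⟨hk1, ?_⟩
    have hk : (1 : ℝ) ≤ k := by exact_mod_cast hk1
    have hslope : ξ * k + a + b ≤ ξ * s := by
      have := mul_le_mul_of_nonneg_left hks hξ.le
      rw [mul_sub, mul_div_cancel₀ _ hξ.ne'] at this
      linarith
    have hks' : (k : ℝ) ≤ s := hks.trans (sub_le_self _ (by positivity))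
    calc f k ≤ ξ * k ^ 2 + (a * k + b) := by linarith [(abs_le.mp (hf k)).2]
      _ ≤ k * (ξ * k + a + b) := by nlinarith
      _ ≤ s * (ξ * s) := by gcongr
      _ = r := by rw [hrs]; ring
  have hup : ∀ k ∈ {k : ℕ | 1 ≤ k ∧ f k ≤ r}, 1 ≤ k ∧ (k : ℝ) ≤ s + (a + b) / ξ := by
    rintro k ⟨hk1, hkr⟩
    refine ⟨hk1, not_lt.mp fun hks => hkr.not_gt ?_⟩
    have hk : (1 : ℝ) ≤ k := by exact_mod_cast hk1
    have hslope : ξ * s < ξ * k - a - b := by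
      have := mul_lt_mul_of_pos_left hks hξ
      rw [mul_add, mul_div_cancel₀ _ hξ.ne'] at this
      linarith
    calc r = ξ * s ^ 2 := hrs
      _ < k * (ξ * k - a - b) := by nlinarith
      _ ≤ ξ * k ^ 2 - (a * k + b) := by nlinarith
      _ ≤ f k := by linarith [(abs_le.mp (hf k)).1]
  obtain ⟨h₁, h₂⟩ := sub_one_lt_ncard_and_ncard_le (S := {k : ℕ | 1 ≤ k ∧ f k ≤ r})
    hlow hup (by positivity)
  rw [abs_le]
  constructor <;> linarith

section Eigenvalues

variable {ξ ρ τ : ℝ}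

lemma rk_mem_Icc (hξ : 0 ≤ ξ) (hρ : 0 ≤ ρ) (hτ : 0 ≤ τ) (k : ℕ) :
    rk ξ ρ τ k ∈ Set.Icc ((ρ + 1) / (2 * τ)) (√(ξ * ρ / τ) * k + (ρ + 1) / (2 * τ)) := by
  have ha : 0 ≤ ξ * ρ / τ := by positivity
  have hc : 0 ≤ (ρ + 1) / (2 * τ) := by positivity
  constructor
  · exact (le_sqrt hc (by positivity)).mpr (by nlinarith [mul_nonneg ha (sq_nonneg (k : ℝ))])
  · refine (sqrt_le_left (by positivity)).mpr ?_
    rw [add_sq, mul_pow, sq_sqrt ha]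
    nlinarith [mul_nonneg (mul_nonneg (sqrt_nonneg (ξ * ρ / τ)) k.cast_nonneg) hc]

lemma abs_lam1_sub_le (hξ : 0 ≤ ξ) (hρ : 0 ≤ ρ) (hτ : 0 ≤ τ) (k : ℕ) :
    |lam1 ξ ρ τ k - ξ * k ^ 2| ≤ √(ξ * ρ / τ) * k + 2 * ((ρ + 1) / (2 * τ)) := by
  obtain ⟨h₁, h₂⟩ := rk_mem_Icc hξ hρ hτ k
  have hc : 0 ≤ (ρ + 1) / (2 * τ) := by positivity
  rw [lam1, abs_le]
  constructor <;> linarith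

lemma abs_lam2_sub_le (hξ : 0 ≤ ξ) (hρ : 0 ≤ ρ) (hτ : 0 ≤ τ) (k : ℕ) :
    |lam2 ξ ρ τ k - ξ * k ^ 2| ≤ √(ξ * ρ / τ) * k + 2 * ((ρ + 1) / (2 * τ)) := by
  obtain ⟨h₁, h₂⟩ := rk_mem_Icc hξ hρ hτ k
  have hc : 0 ≤ (ρ + 1) / (2 * τ) := by positivity
  rw [lam2, abs_le]
  constructor <;> linarith

end Eigenvalues

theorem stmt_13 (ξ ρ τ : ℝ) (hξ : 0 < ξ) (hρ : 0 < ρ) (hτ : 0 < τ) :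
    ∃ α : ℝ, 0 < α ∧ ∀ r : ℝ, 0 < r →
      |(2 / Real.sqrt ξ) * Real.sqrt r - (countFn ξ ρ τ r : ℝ)| ≤ α := by
  set a := √(ξ * ρ / τ)
  set b := 2 * ((ρ + 1) / (2 * τ))
  have ha : 0 ≤ a := sqrt_nonneg _
  have hb : 0 ≤ b := by positivity
  refine ⟨2 * ((a + b) / ξ + 1), by positivity, fun r hr => ?_⟩
  have h₁ := abs_sub_ncard_le_of_abs_sub_sq_le hξ ha hb
    (abs_lam1_sub_le hξ.le hρ.le hτ.le) hr.le
  have h₂ := abs_sub_ncard_le_of_abs_sub_sq_le hξ ha hb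
    (abs_lam2_sub_le hξ.le hρ.le hτ.le) hr.le
  rw [countFn, Nat.cast_add, show 2 / √ξ * √r = √r / √ξ + √r / √ξ by ring]
  rw [abs_le] at h₁ h₂ ⊢
  constructor <;> linarith
end
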